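/- Let g(x) = φ(x)/Φ(x). Then for every x ≥ 0, the derivative g'(x) = −(e^{−x²/2}/(2π)) · ( x√(2π)·Φ(x) + e^{−x²/2} ) / Φ(x)² satisfies both bounds |g'(x)| ≤ (2/π)·(1 + x√(2π)) and |g'(x)| ≤ 2/π + √(2/π)·x·e^{−x²/2}. -/

import Mathlib

/-!
With `E = e^{−x²/2}`, `c = √(2π)` and `a = x c`, the claimed derivative is `−E(aΦ + E)/(2πΦ²)`,
whose modulus is `(aE/Φ + E²/Φ²)/(2π)`. For `x ≥ 0` we have `Φ(x) ≥ Φ(0) = 1/2`, so this is at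
most `(2aE + 4)/(2π) = 2/π + √(2/π)·x·E`; the other bound follows from `E ≤ 1`.
-/

open MeasureTheory Real

/-- The standard normal density `φ(x) = (2π)^{-1/2} exp(−x²/2)`. -/
noncomputable def stdNormalPDF (x : ℝ) : ℝ :=
  (Real.sqrt (2 * Real.pi))⁻¹ * Real.exp (-x ^ 2 / 2)

/-- The standard normal distribution function `Φ(x) = ∫_{−∞}^x φ(u) du`. -/
noncomputable def stdNormalCDF (x : ℝ) : ℝ :=
  ∫ u in Set.Iic x, stdNormalPDF u

open Set ProbabilityTheory

lemma stdNormalPDF_eq_gaussianPDFReal : stdNormalPDF = gaussianPDFReal 0 1 := by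
  ext x
  simp [stdNormalPDF, gaussianPDFReal]

lemma continuous_stdNormalPDF : Continuous stdNormalPDF := by
  unfold stdNormalPDF
  fun_prop

lemma stdNormalPDF_nonneg (x : ℝ) : 0 ≤ stdNormalPDF x := by
  unfold stdNormalPDF
  positivity

lemma stdNormalPDF_neg (x : ℝ) : stdNormalPDF (-x) = stdNormalPDF x := by
  simp [stdNormalPDF]

lemma integrable_stdNormalPDF : Integrable stdNormalPDF := by
  rw [stdNormalPDF_eq_gaussianPDFReal]
  exact integrable_gaussianPDFReal 0 1

lemma integral_stdNormalPDF : ∫ x, stdNormalPDF x = 1 := by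
  rw [stdNormalPDF_eq_gaussianPDFReal]
  exact integral_gaussianPDFReal_eq_one 0 one_ne_zero

lemma hasDerivAt_stdNormalPDF (x : ℝ) : HasDerivAt stdNormalPDF (-x * stdNormalPDF x) x := by
  have h : HasDerivAt (fun y : ℝ => -y ^ 2 / 2) (-x) x :=
    (((hasDerivAt_pow 2 x).neg).div_const 2).congr_deriv (by ring)
  exact ((h.exp).const_mul (√(2 * π))⁻¹).congr_deriv (by rw [stdNormalPDF]; ring)

lemma stdNormalCDF_zero : stdNormalCDF 0 = 1 / 2 := by
  have hsymm : ∫ x in Iic (0 : ℝ), stdNormalPDF x = ∫ x in Ioi (0 : ℝ), stdNormalPDF x := by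
    simpa only [stdNormalPDF_neg, neg_zero] using integral_comp_neg_Iic 0 stdNormalPDF
  have hsum := intervalIntegral.integral_Iic_add_Ioi (b := (0 : ℝ))
    integrable_stdNormalPDF.integrableOn integrable_stdNormalPDF.integrableOn
  rw [integral_stdNormalPDF] at hsum
  unfold stdNormalCDF
  linarith

lemma stdNormalCDF_eq_add_intervalIntegral (x : ℝ) :
    stdNormalCDF x = stdNormalCDF 0 + ∫ t in (0 : ℝ)..x, stdNormalPDF t := by
  rw [← intervalIntegral.integral_Iic_sub_Iic integrable_stdNormalPDF.integrableOn
    integrable_stdNormalPDF.integrableOn, stdNormalCDF, stdNormalCDF, add_sub_cancel]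

lemma hasDerivAt_stdNormalCDF (x : ℝ) : HasDerivAt stdNormalCDF (stdNormalPDF x) x := by
  rw [funext stdNormalCDF_eq_add_intervalIntegral]
  exact (intervalIntegral.integral_hasDerivAt_right integrable_stdNormalPDF.intervalIntegrable
    continuous_stdNormalPDF.aestronglyMeasurable.stronglyMeasurableAtFilter
    continuous_stdNormalPDF.continuousAt).const_add _

lemma monotone_stdNormalCDF : Monotone stdNormalCDF :=
  monotone_of_deriv_nonneg (fun x => (hasDerivAt_stdNormalCDF x).differentiableAt)
    (fun x => (hasDerivAt_stdNormalCDF x).deriv ▸ stdNormalPDF_nonneg x)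

lemma one_half_le_stdNormalCDF {x : ℝ} (hx : 0 ≤ x) : 1 / 2 ≤ stdNormalCDF x :=
  stdNormalCDF_zero ▸ monotone_stdNormalCDF hx

lemma hasDerivAt_stdNormalPDF_div_stdNormalCDF {x : ℝ} (hx : stdNormalCDF x ≠ 0) :
    HasDerivAt (fun y => stdNormalPDF y / stdNormalCDF y)
      (-stdNormalPDF x * (x * stdNormalCDF x + stdNormalPDF x) / stdNormalCDF x ^ 2) x :=
  ((hasDerivAt_stdNormalPDF x).div (hasDerivAt_stdNormalCDF x) hx).congr_deriv (by ring)

lemma abs_neg_div_two_pi_mul_le {a Φ E : ℝ} (ha : 0 ≤ a) (hΦ : 1 / 2 ≤ Φ) (hE₀ : 0 ≤ E)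
    (hE₁ : E ≤ 1) : |-(E / (2 * π)) * ((a * Φ + E) / Φ ^ 2)| ≤ 2 / π + a * E / π := by
  have hΦ₀ : 0 < Φ := by linarith
  have key : E * ((a * Φ + E) / Φ ^ 2) ≤ 2 * a * E + 4 := by
    rw [mul_div_assoc', div_le_iff₀ (by positivity)]
    nlinarith [mul_nonneg (mul_nonneg ha hE₀) (by linarith : (0 : ℝ) ≤ 2 * Φ - 1),
      mul_le_mul hE₁ hE₁ hE₀ zero_le_one]
  rw [abs_of_nonpos (mul_nonpos_of_nonpos_of_nonneg (by simp only [neg_nonpos]; positivity)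
    (by positivity)), neg_mul, neg_neg, div_mul_eq_mul_div, div_le_iff₀ (by positivity)]
  have hπ : (2 / π + a * E / π) * (2 * π) = 2 * a * E + 4 := by field_simp; ring
  linarith

/-- For `g = φ/Φ` and `x ≥ 0`, the derivative
`g'(x) = −(e^{−x²/2}/(2π))·(x√(2π)·Φ(x) + e^{−x²/2})/Φ(x)²` satisfies both bounds
`|g'(x)| ≤ (2/π)(1 + x√(2π))` and `|g'(x)| ≤ 2/π + √(2/π)·x·e^{−x²/2}`. -/
theorem stmt18 (x : ℝ) (hx : 0 ≤ x) :
    HasDerivAt (fun y => stdNormalPDF y / stdNormalCDF y)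
      (-(Real.exp (-x ^ 2 / 2) / (2 * Real.pi)) *
        ((x * Real.sqrt (2 * Real.pi) * stdNormalCDF x + Real.exp (-x ^ 2 / 2)) /
          stdNormalCDF x ^ 2)) x ∧
    |(-(Real.exp (-x ^ 2 / 2) / (2 * Real.pi)) *
        ((x * Real.sqrt (2 * Real.pi) * stdNormalCDF x + Real.exp (-x ^ 2 / 2)) /
          stdNormalCDF x ^ 2))|
      ≤ 2 / Real.pi * (1 + x * Real.sqrt (2 * Real.pi)) ∧
    |(-(Real.exp (-x ^ 2 / 2) / (2 * Real.pi)) *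
        ((x * Real.sqrt (2 * Real.pi) * stdNormalCDF x + Real.exp (-x ^ 2 / 2)) /
          stdNormalCDF x ^ 2))|
      ≤ 2 / Real.pi + Real.sqrt (2 / Real.pi) * x * Real.exp (-x ^ 2 / 2) := by
  have hΦ := one_half_le_stdNormalCDF hx
  have hc : 0 < √(2 * π) := by positivity
  have hE₁ : exp (-x ^ 2 / 2) ≤ 1 := exp_le_one_iff.mpr (by nlinarith)
  have hbound := abs_neg_div_two_pi_mul_le (mul_nonneg hx hc.le) hΦ (exp_pos _).le hE₁
  refine ⟨?_, hbound.trans ?_, hbound.trans_eq ?_⟩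
  · convert hasDerivAt_stdNormalPDF_div_stdNormalCDF (x := x) (by linarith) using 1
    have hc2 : √(2 * π) ^ 2 = 2 * π := sq_sqrt (by positivity)
    simp only [stdNormalPDF]
    field_simp
    rw [hc2]
  · have hxcE : x * √(2 * π) * exp (-x ^ 2 / 2) ≤ x * √(2 * π) := by
      nlinarith [mul_nonneg hx hc.le]
    rw [mul_add, mul_one, mul_comm (2 / π), mul_div_assoc']
    gcongr
    nlinarith [mul_nonneg hx hc.le, pi_pos]
  · have hsqrt : √(2 / π) = √(2 * π) / π := by
      rw [show 2 / π = 2 * π / π ^ 2 by field_simp, sqrt_div' _ (sq_nonneg π), sqrt_sq pi_pos.le]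
    rw [hsqrt]
    ring
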